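/- Composite drift bound with per-cycle averaging: under the FedCluster recursion where within each cycle K each device performs t ≤ E steps of size at most η₀ in directions bounded in norm by G, and cycles are linked by averaging (which preserves the distance bound by convexity of ‖·‖²), the bound ‖w_{K,t} − W₀‖² ≤ η₀²G²(M t² + M K E²) ≤ η₀²E²M²G² holds, where w_{K,t} is any device iterate at step t of cycle K and W₀ the global model at the start of the round. -/
import Mathlib


open Finset

/-- Composite drift bound with per-cycle averaging (FedCluster recursion). -/
theorem composite_drift_bound
    {d n : ℕ} (M E : ℕ) (hM : 0 < M) (hE : 0 < E)
    (W₀ : EuclideanSpace ℝ (Fin d))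
    (Wg : ℕ → EuclideanSpace ℝ (Fin d))  -- global model at the start of each cycle
    (w : ℕ → ℕ → Fin n → EuclideanSpace ℝ (Fin d))  -- device iterates
    (v : ℕ → ℕ → Fin n → EuclideanSpace ℝ (Fin d))  -- update directions
    (η : ℕ → ℕ → ℝ) (η₀ G : ℝ) (hη₀ : 0 ≤ η₀) (hG : 0 ≤ G)
    (a : ℕ → Fin n → ℝ)  -- averaging weights
    (ha : ∀ K k, 0 ≤ a K k) (hasum : ∀ K, ∑ k, a K k = 1)
    (hW0 : Wg 0 = W₀)
    (hinit : ∀ K k, K < M → w K 0 k = Wg K)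
    (hstep : ∀ K t k, K < M → t < E →
      w K (t + 1) k = w K t k - η K t • v K t k)
    (hηle : ∀ K t, 0 ≤ η K t ∧ η K t ≤ η₀)
    (hvle : ∀ K t k, ‖v K t k‖ ≤ G)
    (havg : ∀ K, K + 1 < M → Wg (K + 1) = ∑ k, a K k • w K E k) :
    ∀ K t k, K < M → t ≤ E →
      ‖w K t k - W₀‖ ^ 2 ≤
          η₀ ^ 2 * G ^ 2 * ((M : ℝ) * (t : ℝ) ^ 2 + (M : ℝ) * (K : ℝ) * (E : ℝ) ^ 2) ∧
      η₀ ^ 2 * G ^ 2 * ((M : ℝ) * (t : ℝ) ^ 2 + (M : ℝ) * (K : ℝ) * (E : ℝ) ^ 2) ≤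
          η₀ ^ 2 * (E : ℝ) ^ 2 * (M : ℝ) ^ 2 * G ^ 2 := by

  have hstepnorm : ∀ K t k, K < M → t < E →
      ‖w K (t + 1) k - W₀‖ ≤ ‖w K t k - W₀‖ + η₀ * G := by
    intro K t k hK ht
    rw [hstep K t k hK ht]
    have heq : w K t k - η K t • v K t k - W₀ = (w K t k - W₀) - η K t • v K t k := by
      abel
    rw [heq]
    refine (norm_sub_le _ _).trans ?_
    have h1 := (hηle K t).1
    have h2 := (hηle K t).2
    have h3 := hvle K t k
    have : ‖η K t • v K t k‖ ≤ η₀ * G := by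
      rw [norm_smul, Real.norm_eq_abs, abs_of_nonneg h1]
      exact mul_le_mul h2 h3 (norm_nonneg _) hη₀
    linarith
  have inner : ∀ K, K < M → ‖Wg K - W₀‖ ≤ η₀ * G * ((K : ℝ) * E) →
      ∀ t, t ≤ E → ∀ k, ‖w K t k - W₀‖ ≤ η₀ * G * ((t : ℝ) + (K : ℝ) * E) := by
    intro K hK hWg t
    induction t with
    | zero =>
      intro _ k
      rw [hinit K k hK]
      simpa using hWg
    | succ t ih =>
      intro ht k
      have ht' : t < E := Nat.lt_of_succ_le ht
      have h1 := hstepnorm K t k hK ht'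
      have h2 := ih (le_of_lt ht') k
      have hηG : 0 ≤ η₀ * G := mul_nonneg hη₀ hG
      push_cast
      nlinarith [h1, h2]
  have hWgb : ∀ K, K < M → ‖Wg K - W₀‖ ≤ η₀ * G * ((K : ℝ) * E) := by
    intro K
    induction K with
    | zero => intro _; rw [hW0]; simp
    | succ K ih =>
      intro hK
      have hK' : K < M := Nat.lt_of_succ_lt hK
      have hw : ∀ k, ‖w K E k - W₀‖ ≤ η₀ * G * ((E : ℝ) + (K : ℝ) * E) :=
        inner K hK' (ih hK') E le_rfl
      rw [havg K hK]
      have hsum : ∑ k, a K k • w K E k - W₀ = ∑ k, a K k • (w K E k - W₀) := by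
        simp only [smul_sub, Finset.sum_sub_distrib, ← Finset.sum_smul, hasum K, one_smul]
      rw [hsum]
      calc ‖∑ k, a K k • (w K E k - W₀)‖ ≤ ∑ k, ‖a K k • (w K E k - W₀)‖ :=
            norm_sum_le _ _
        _ = ∑ k, a K k * ‖w K E k - W₀‖ := by
            refine Finset.sum_congr rfl fun k _ => ?_
            rw [norm_smul, Real.norm_eq_abs, abs_of_nonneg (ha K k)]
        _ ≤ ∑ k, a K k * (η₀ * G * ((E : ℝ) + (K : ℝ) * E)) :=
            Finset.sum_le_sum fun k _ =>
              mul_le_mul_of_nonneg_left (hw k) (ha K k)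
        _ = η₀ * G * ((((K : ℕ) + 1 : ℕ) : ℝ) * E) := by
            rw [← Finset.sum_mul, hasum K, one_mul]; push_cast; ring
  intro K t k hK ht
  have h := inner K hK (hWgb K hK) t ht k
  have hKM : (K : ℝ) + 1 ≤ (M : ℝ) := by exact_mod_cast hK
  have htE : (t : ℝ) ≤ (E : ℝ) := by exact_mod_cast ht
  have hK0 : (0 : ℝ) ≤ K := Nat.cast_nonneg K
  have ht0 : (0 : ℝ) ≤ t := Nat.cast_nonneg t
  have hE0 : (0 : ℝ) ≤ E := Nat.cast_nonneg E
  have hpoly : ((t : ℝ) + (K : ℝ) * E) ^ 2 ≤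
      (M : ℝ) * (t : ℝ) ^ 2 + (M : ℝ) * (K : ℝ) * (E : ℝ) ^ 2 := by
    nlinarith [mul_nonneg hK0 (sq_nonneg ((t : ℝ) - E)),
      mul_nonneg (sub_nonneg.2 (by linarith : (K : ℝ) ≤ (M : ℝ) - 1)) (sq_nonneg (t : ℝ)),
      mul_nonneg (mul_nonneg hK0 (sq_nonneg (E : ℝ)))
        (sub_nonneg.2 (by linarith : (K : ℝ) ≤ (M : ℝ) - 1))]
  constructor
  · have hsq : ‖w K t k - W₀‖ ^ 2 ≤ (η₀ * G * ((t : ℝ) + (K : ℝ) * E)) ^ 2 :=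
      pow_le_pow_left₀ (norm_nonneg _) h 2
    have hfac : (0 : ℝ) ≤ η₀ ^ 2 * G ^ 2 := by positivity
    calc ‖w K t k - W₀‖ ^ 2 ≤ (η₀ * G * ((t : ℝ) + (K : ℝ) * E)) ^ 2 := hsq
      _ = η₀ ^ 2 * G ^ 2 * ((t : ℝ) + (K : ℝ) * E) ^ 2 := by ring
      _ ≤ η₀ ^ 2 * G ^ 2 * ((M : ℝ) * (t : ℝ) ^ 2 + (M : ℝ) * (K : ℝ) * (E : ℝ) ^ 2) :=
          mul_le_mul_of_nonneg_left hpoly hfac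
  · have hfac : (0 : ℝ) ≤ η₀ ^ 2 * G ^ 2 := by positivity
    have : (M : ℝ) * (t : ℝ) ^ 2 + (M : ℝ) * (K : ℝ) * (E : ℝ) ^ 2 ≤
        (E : ℝ) ^ 2 * (M : ℝ) ^ 2 := by
      have hM1 : (1 : ℝ) ≤ (M : ℝ) := by exact_mod_cast hM
      have ht2 : (t : ℝ) ^ 2 ≤ (E : ℝ) ^ 2 := by nlinarith
      nlinarith [mul_nonneg (sub_nonneg.2 hM1) (sub_nonneg.2 ht2),
        mul_nonneg (mul_nonneg (by linarith : (0 : ℝ) ≤ (M : ℝ)) (sq_nonneg (E : ℝ)))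
          (sub_nonneg.2 (by linarith : (K : ℝ) ≤ (M : ℝ) - 1))]
    nlinarith [mul_le_mul_of_nonneg_left this hfac]
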